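/- arXiv:cs/0703064 — 2 statements merged into one kernel-verified Lean document; each statement's English description precedes it below -/
import Mathlib

section
/- For every positive integer i, the Boolean algebra B_{ω×i}, i.e. the product of i copies of the Boolean algebra of finite and cofinite subsets of ℕ, has an automatic presentation: there exist a finite alphabet Σ, a regular language A ⊆ Σ*, regular ternary relations on A that are the graphs of binary operations ⊔ and ⊓, a regular binary relation that is the graph of a complementation operation, and elements 0, 1 ∈ A, such that the resulting structure is a Boolean algebra isomorphic to the product of i copies of the Boolean algebra of finite and cofinite subsets of ℕ. -/
/-- The convolution of an `n`-tuple of words. -/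
def conv {α : Type*} {n : ℕ} (w : Fin n → List α) : List (Fin n → Option α) :=
  (List.range (Finset.univ.sup fun i => (w i).length)).map fun k i => (w i)[k]?

/-- The carrier of the Boolean algebra of finite and cofinite subsets of ℕ. -/
def FinCofin : Type := {S : Set ℕ // S.Finite ∨ Sᶜ.Finite}

namespace FinCofin

def union (S T : FinCofin) : FinCofin :=
  ⟨S.1 ∪ T.1, by
    rcases S.2 with hS | hS
    · rcases T.2 with hT | hT
      · exact Or.inl (hS.union hT)
      · exact Or.inr (hT.subset (by rw [Set.compl_union]; exact Set.inter_subset_right))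
    · exact Or.inr (hS.subset (by rw [Set.compl_union]; exact Set.inter_subset_left))⟩

def inter (S T : FinCofin) : FinCofin :=
  ⟨S.1 ∩ T.1, by
    rcases S.2 with hS | hS
    · exact Or.inl (hS.subset Set.inter_subset_left)
    · rcases T.2 with hT | hT
      · exact Or.inl (hT.subset Set.inter_subset_right)
      · exact Or.inr (by rw [Set.compl_inter]; exact hS.union hT)⟩

def compl (S : FinCofin) : FinCofin :=
  ⟨S.1ᶜ, by rcases S.2 with h | h
            · exact Or.inr (by rwa [compl_compl])
            · exact Or.inl h⟩

def bot : FinCofin := ⟨∅, Or.inl Set.finite_empty⟩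

def top : FinCofin := ⟨Set.univ, Or.inr (by simp)⟩

end FinCofin

/-!
Letters are subsets of `Fin i`: a tuple of finite or cofinite sets `S j` is the eventually
constant sequence `n ↦ {j | n ∈ S j}`, and such a sequence is encoded by the shortest word which,
continued by repeating its last letter, gives the sequence. The Boolean operations act letter by
letter on these sequences, so the graph of an operation is recognised by an automaton reading the
convolution: it checks that every track is a shortest word and that the operation holds at each
position, reading padding as the last letter seen on that track.
-/

open Filter

theorem List.forall_prefix_append_singleton_iff {T : Type*} {Q : List T → T → Prop}
    {u : List T} {a : T} :
    (∀ v b, v ++ [b] <+: u ++ [a] → Q v b) ↔ (∀ v b, v ++ [b] <+: u → Q v b) ∧ Q u a := by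
  refine ⟨fun h => ⟨fun v b hv => h v b (hv.trans (List.prefix_append _ _)),
    h u a List.prefix_rfl⟩, fun ⟨hu, ha⟩ v b hv => ?_⟩
  rcases List.prefix_concat_iff.mp hv with heq | hv
  · obtain ⟨rfl, hb⟩ := List.append_inj' heq rfl
    rwa [List.singleton_inj.mp hb]
  · exact hu v b hv

theorem List.filterMap_getElem?_range {Γ : Type*} (l : List Γ) (k : ℕ) :
    (List.range k).filterMap (l[·]?) = l.take k := by
  induction k with
  | zero => simp
  | succ k ih =>
    rw [List.range_succ, List.filterMap_append, ih, List.take_add_one]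
    cases h : l[k]? <;> simp [h]

theorem List.getElem?_append_toList {Γ : Type*} {l : List Γ} {o : Option Γ} {M k : ℕ}
    (hl : l.length ≤ M) (ho : o.isSome → l.length = M) (hk : k ≤ M) :
    (l ++ o.toList)[k]? = if k < M then l[k]? else o := by
  cases o with
  | none =>
    split_ifs with hkM
    · simp
    · simp [List.getElem?_eq_none (show l.length ≤ k by omega)]
  | some x =>
    have hlM := ho rfl
    split_ifs with hkM
    · exact List.getElem?_append_left (by omega)
    · simp [show k = l.length by omega]

namespace Language

variable {T σ : Type*} [Finite σ]

theorem isRegular_preimage_of_snoc (f : List T → σ) (step : σ → T → σ)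
    (hf : ∀ u a, f (u ++ [a]) = step (f u) a) (acc : Set σ) :
    Language.IsRegular (f ⁻¹' acc : Language T) := by
  let M : DFA T σ := ⟨step, f [], acc⟩
  have hM : ∀ u, M.eval u = f u := fun u => by
    induction u using List.reverseRecOn with
    | nil => rfl
    | append_singleton u a ih => rw [DFA.eval_append_singleton, ih, hf]
  refine isRegular_iff.mpr ⟨σ, Fintype.ofFinite σ, M, ?_⟩
  ext u
  rw [DFA.mem_accepts, hM]
  rfl

theorem isRegular_setOf_forall_prefix (f : List T → σ) (step : σ → T → σ)
    (hf : ∀ u a, f (u ++ [a]) = step (f u) a) (R : σ → T → Prop) :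
    Language.IsRegular ({u | ∀ v a, v ++ [a] <+: u → R (f v) a} : Language T) :=
  isRegular_preimage_of_snoc (fun u => (f u, ∀ v a, v ++ [a] <+: u → R (f v) a))
    (fun s a => (step s.1 a, s.2 ∧ R s.1 a))
    (fun u a => Prod.ext (hf u a) (propext List.forall_prefix_append_singleton_iff)) {s | s.2}

end Language

namespace Convolution

variable {Γ : Type*} {n : ℕ}

def column (u : List (Fin n → Option Γ)) (j : Fin n) : List Γ := u.filterMap (· j)

@[simp]
theorem column_append_singleton (u : List (Fin n → Option Γ)) (a : Fin n → Option Γ) (j : Fin n) :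
    column (u ++ [a]) j = column u j ++ (a j).toList := by
  cases h : a j <;> simp [column, h]

theorem length_column_le (u : List (Fin n → Option Γ)) (j : Fin n) :
    (column u j).length ≤ u.length :=
  List.length_filterMap_le _ _

theorem isRegular_setOf_forall_column_mem {L : Language Γ} (hL : L.IsRegular) :
    Language.IsRegular ({u | ∀ j, column u j ∈ L} : Language (Fin n → Option Γ)) := by
  obtain ⟨σ, _, M, rfl⟩ := hL
  exact Language.isRegular_preimage_of_snoc (fun u j => M.eval (column u j))
    (fun s a j => M.evalFrom (s j) (a j).toList)
    (fun u a => funext fun j => by rw [column_append_singleton]; exact M.evalFrom_of_append _ _ _)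
    {s | ∀ j, s j ∈ M.accept}

theorem length_conv (w : Fin n → List Γ) :
    (conv w).length = Finset.univ.sup fun j => (w j).length := by
  simp [conv]

theorem length_le_length_conv (w : Fin n → List Γ) (j : Fin n) :
    (w j).length ≤ (conv w).length :=
  length_conv w ▸ Finset.le_sup (f := fun j => (w j).length) (Finset.mem_univ j)

theorem exists_lt_length_of_lt_length_conv {w : Fin n → List Γ} {k : ℕ}
    (hk : k < (conv w).length) : ∃ j, k < (w j).length := by
  simpa [length_conv, Finset.lt_sup_iff] using hk

theorem column_take_conv (w : Fin n → List Γ) {k : ℕ} (hk : k ≤ (conv w).length) (j : Fin n) :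
    column ((conv w).take k) j = (w j).take k := by
  rw [length_conv] at hk
  rw [conv, ← List.map_take, List.take_range, min_eq_left hk, column, List.filterMap_map]
  exact List.filterMap_getElem?_range (w j) k

@[simp]
theorem column_conv (w : Fin n → List Γ) (j : Fin n) : column (conv w) j = w j := by
  rw [← List.take_length (l := conv w), column_take_conv w le_rfl,
    List.take_of_length_le (length_le_length_conv w j)]

theorem conv_append_singleton (w : Fin n → List Γ) (a : Fin n → Option Γ)
    (hsome : ∃ j, (a j).isSome) (hlen : ∀ j, (a j).isSome → (w j).length = (conv w).length) :
    conv (fun j => w j ++ (a j).toList) = conv w ++ [a] := by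
  set M := (conv w).length with hM
  have hle : ∀ j, (w j).length ≤ M := length_le_length_conv w
  have hlen' : (Finset.univ.sup fun j => (w j ++ (a j).toList).length) = M + 1 := by
    obtain ⟨j₀, hj₀⟩ := hsome
    refine le_antisymm (Finset.sup_le fun j _ => ?_) ?_
    · cases h : a j
      · simpa using (hle j).trans M.le_succ
      · simp [← hlen j (by simp [h])]
    · refine le_trans ?_ (Finset.le_sup (f := fun j => (w j ++ (a j).toList).length)
        (Finset.mem_univ j₀))
      obtain ⟨x, hx⟩ := Option.isSome_iff_exists.mp hj₀
      simp [hx, hlen j₀ hj₀]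
  have hentry : ∀ k ≤ M, (fun j => (w j ++ (a j).toList)[k]?) =
      if k < M then fun j => (w j)[k]? else a := fun k hk => by
    split_ifs with hkM <;> funext j <;>
      simp [List.getElem?_append_toList (hle j) (hlen j) hk, hkM]
  rw [conv, hlen', List.range_succ, List.map_append, List.map_singleton, hentry M le_rfl,
    if_neg (lt_irrefl M), conv, ← length_conv, ← hM]
  congr 1
  refine List.map_congr_left fun k hk => ?_
  rw [List.mem_range] at hk
  rw [hentry k hk.le, if_pos hk]

-- Exactly the range of `conv` (see `conv_column_of_mem_convShaped`): each track is a word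
-- followed by padding, and no letter is padding on every track.
def convShaped : Language (Fin n → Option Γ) :=
  {u | ∀ v a, v ++ [a] <+: u →
    (∃ j, (a j).isSome) ∧ ∀ j, (a j).isSome → (column v j).length = v.length}

theorem isRegular_convShaped : (convShaped : Language (Fin n → Option Γ)).IsRegular :=
  Language.isRegular_setOf_forall_prefix (fun v j => (column v j).length = v.length)
    (fun s a j => s j ∧ (a j).isSome)
    (fun u a => funext fun j => propext <| by
      have := length_column_le u j
      cases h : a j
      · simp [h]
        omega
      · simp [h])
    (fun s a => (∃ j, (a j).isSome) ∧ ∀ j, (a j).isSome → s j)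

theorem column_of_prefix_conv {w : Fin n → List Γ} {v : List (Fin n → Option Γ)}
    {a : Fin n → Option Γ} (h : v ++ [a] <+: conv w) (j : Fin n) :
    column v j = (w j).take v.length ∧
      column v j ++ (a j).toList = (w j).take (v.length + 1) := by
  have hlen : v.length + 1 ≤ (conv w).length := by simpa using h.length_le
  constructor
  · rw [List.prefix_iff_eq_take.mp ((List.prefix_append v [a]).trans h),
      column_take_conv w (by omega), List.length_take, min_eq_left (by omega)]
  · rw [← column_append_singleton, List.prefix_iff_eq_take.mp h, List.length_append,
      List.length_singleton, column_take_conv w hlen]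

theorem conv_mem_convShaped (w : Fin n → List Γ) : conv w ∈ convShaped := by
  intro v a h
  have hlen : v.length < (conv w).length := by simpa using h.length_le
  have key : ∀ j, (a j).isSome ↔ v.length < (w j).length := fun j => by
    have := congrArg List.length (column_of_prefix_conv h j).2
    rw [List.length_append, (column_of_prefix_conv h j).1, List.length_take,
      List.length_take] at this
    cases h : a j <;> simp [h] at this ⊢ <;> omega
  obtain ⟨j₀, hj₀⟩ := exists_lt_length_of_lt_length_conv hlen
  refine ⟨⟨j₀, (key j₀).mpr hj₀⟩, fun j hj => ?_⟩
  rw [(column_of_prefix_conv h j).1, List.length_take, min_eq_left ((key j).mp hj).le]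

theorem conv_column_of_mem_convShaped {u : List (Fin n → Option Γ)} (hu : u ∈ convShaped) :
    conv (column u) = u := by
  induction u using List.reverseRecOn with
  | nil => simp [conv, column]
  | append_singleton u a ih =>
    obtain ⟨hu, hsome, hlen⟩ := List.forall_prefix_append_singleton_iff.mp hu
    have hcol : column (u ++ [a]) = fun j => column u j ++ (a j).toList :=
      funext (column_append_singleton u a)
    rw [hcol, conv_append_singleton _ _ hsome (fun j hj => by rw [ih hu]; exact hlen j hj),
      ih hu]

end Convolution

namespace EventuallyConstWords

open Convolution

variable {Γ : Type*}

def canonicalWords (Γ : Type*) : Set (List Γ) := {w | w.dropLast.getLast? ≠ w.getLast?}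

theorem ne_nil_of_mem_canonicalWords {w : List Γ} (hw : w ∈ canonicalWords Γ) : w ≠ [] := by
  rintro rfl
  exact hw rfl

theorem singleton_mem_canonicalWords (x : Γ) : [x] ∈ canonicalWords Γ := by
  simp [canonicalWords]

theorem isRegular_canonicalWords [Finite Γ] :
    Language.IsRegular (canonicalWords Γ : Language Γ) :=
  Language.isRegular_preimage_of_snoc (fun w => (w.dropLast.getLast?, w.getLast?))
    (fun s a => (s.2, some a)) (fun u a => by simp) {s | s.1 ≠ s.2}

variable [Inhabited Γ]

def decode (w : List Γ) (k : ℕ) : Γ := w.getD (min k (w.length - 1)) default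

theorem decode_of_lt {w : List Γ} {k : ℕ} (hk : k < w.length) : decode w k = w[k] := by
  rw [decode, min_eq_left (by omega), List.getD_eq_getElem _ _ hk]

theorem decode_of_length_le {w : List Γ} {k : ℕ} (hk : w.length ≤ k + 1) :
    decode w k = decode w (w.length - 1) := by
  rw [decode, decode, min_eq_right (by omega), min_self]

theorem decode_length_sub_one (w : List Γ) : decode w (w.length - 1) = w.getLast?.getD default := by
  rw [decode, min_self, List.getD_eq_getElem?_getD, List.getLast?_eq_getElem?]

theorem decode_append_toList {x : List Γ} {k : ℕ} (hk : x.length ≤ k) (o : Option Γ) :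
    decode (x ++ o.toList) k = o.getD (x.getLast?.getD default) := by
  cases o with
  | none =>
    rw [Option.toList_none, List.append_nil, decode_of_length_le (by omega),
      decode_length_sub_one, Option.getD_none]
  | some y =>
    rw [Option.toList_some, decode_of_length_le (by simp; omega), decode_length_sub_one]
    simp

theorem decode_take_succ (w : List Γ) (k : ℕ) : decode (w.take (k + 1)) k = decode w k := by
  rcases lt_or_ge k w.length with hk | hk
  · rw [decode_of_lt (by simp; omega), decode_of_lt hk, List.getElem_take]
  · rw [List.take_of_length_le (by omega)]

theorem decode_singleton (x : Γ) (k : ℕ) : decode [x] k = x := by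
  simp [decode]

theorem eventuallyConst_decode (w : List Γ) : EventuallyConst (decode w) atTop :=
  eventuallyConst_atTop.mpr ⟨w.length - 1, fun _ hk => decode_of_length_le (by omega)⟩

theorem decode_ne_of_mem_canonicalWords {w : List Γ} (hw : w ∈ canonicalWords Γ)
    (h2 : 2 ≤ w.length) : decode w (w.length - 2) ≠ decode w (w.length - 1) := by
  rw [decode_of_lt (by omega), decode_of_lt (by omega)]
  intro heq
  apply hw
  rw [List.getLast?_dropLast, if_neg (by omega), List.getLast?_eq_getElem?,
    List.getElem?_eq_getElem (by omega), List.getElem?_eq_getElem (by omega), heq]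

theorem length_le_of_decode_eq {a b : List Γ} (ha : a ∈ canonicalWords Γ) (hb : b ≠ [])
    (h : decode a = decode b) : a.length ≤ b.length := by
  by_contra! hlt
  have hb' := List.length_pos_iff.mpr hb
  apply decode_ne_of_mem_canonicalWords ha (by omega)
  rw [h, decode_of_length_le (by omega), decode_of_length_le (k := a.length - 1) (by omega)]

theorem decode_injOn : Set.InjOn (decode (Γ := Γ)) (canonicalWords Γ) := by
  intro a ha b hb h
  have hlen := le_antisymm (length_le_of_decode_eq ha (ne_nil_of_mem_canonicalWords hb) h)
    (length_le_of_decode_eq hb (ne_nil_of_mem_canonicalWords ha) h.symm)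
  exact List.ext_getElem hlen fun k h₁ h₂ => by rw [← decode_of_lt h₁, h, decode_of_lt h₂]

theorem exists_mem_canonicalWords_decode_eq {s : ℕ → Γ} (hs : EventuallyConst s atTop) :
    ∃ w ∈ canonicalWords Γ, decode w = s := by
  classical
  have hex := eventuallyConst_atTop.mp hs
  set N := Nat.find hex with hN
  refine ⟨(List.range (N + 1)).map s, ?_, funext fun k => ?_⟩
  · rcases Nat.eq_zero_or_pos N with h0 | hpos
    · simp [canonicalWords, h0]
    obtain ⟨m, hm⟩ : ∃ m, N = m + 1 := ⟨N - 1, by omega⟩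
    simp only [canonicalWords, hm, List.range_succ, List.map_append, List.map_singleton,
      List.dropLast_concat, List.getLast?_concat, Set.mem_ofPred_eq, ne_eq, Option.some_inj]
    intro heq
    refine Nat.find_min hex (m := m) (by omega) fun k hk => ?_
    rcases hk.eq_or_lt with rfl | hk
    · rfl
    · rw [Nat.find_spec hex k (by omega), ← hN, hm, heq]
  · rcases lt_or_ge k (N + 1) with hk | hk
    · rw [decode_of_lt (by simpa using hk)]
      simp
    · rw [decode_of_length_le (by simp; omega), decode_of_lt (by simp)]
      simpa using (Nat.find_spec hex k (by omega)).symm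

theorem decode_injective : Function.Injective fun a : canonicalWords Γ => decode a.1 :=
  fun a b h => Subtype.ext (decode_injOn a.2 b.2 h)

variable (Γ) in
noncomputable def decodeEquiv : canonicalWords Γ ≃ {s : ℕ → Γ // EventuallyConst s atTop} :=
  Equiv.ofBijective (fun w => ⟨decode w.1, eventuallyConst_decode w.1⟩)
    ⟨fun _ _ h => decode_injective (congrArg Subtype.val h), fun s =>
      let ⟨w, hw, h⟩ := exists_mem_canonicalWords_decode_eq s.2
      ⟨⟨w, hw⟩, Subtype.ext h⟩⟩

variable {n : ℕ}

theorem decode_min_length_conv (w : Fin n → List Γ) (j : Fin n) (k : ℕ) :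
    decode (w j) (min k ((conv w).length - 1)) = decode (w j) k := by
  have := length_le_length_conv w j
  rcases lt_or_ge k (conv w).length with hk | hk
  · rw [min_eq_left (by omega)]
  · rw [decode_of_length_le (by omega), decode_of_length_le (k := k) (by omega)]

def lastSeenLang (P : (Fin n → Γ) → Prop) : Language (Fin n → Option Γ) :=
  {u | ∀ v a, v ++ [a] <+: u → P fun j => (a j).getD ((column v j).getLast?.getD default)}

theorem isRegular_lastSeenLang [Finite Γ] (P : (Fin n → Γ) → Prop) :
    (lastSeenLang P).IsRegular :=
  Language.isRegular_setOf_forall_prefix (fun v j => (column v j).getLast?)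
    (fun s a j => (a j).or (s j))
    (fun u a => funext fun j => by cases h : a j <;> simp [h])
    (fun s a => P fun j => (a j).getD ((s j).getD default))

theorem getD_getLast?_column_of_prefix_conv {w : Fin n → List Γ} {v : List (Fin n → Option Γ)}
    {a : Fin n → Option Γ} (h : v ++ [a] <+: conv w) (j : Fin n) :
    (a j).getD ((column v j).getLast?.getD default) = decode (w j) v.length := by
  obtain ⟨h₁, h₂⟩ := column_of_prefix_conv h j
  rw [← decode_append_toList (h₁ ▸ List.length_take_le _ _), h₂, decode_take_succ]

theorem forall_lt_length_of_conv_mem_lastSeenLang {P : (Fin n → Γ) → Prop}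
    {w : Fin n → List Γ} (h : conv w ∈ lastSeenLang P) :
    ∀ k < (conv w).length, P fun j => decode (w j) k := by
  intro k hk
  have hpre : (conv w).take k ++ [(conv w)[k]] <+: conv w :=
    List.take_concat_get' _ _ hk ▸ List.take_prefix _ _
  simpa only [getD_getLast?_column_of_prefix_conv hpre, List.length_take, min_eq_left hk.le]
    using h _ _ hpre

def pointwiseLang (P : (Fin n → Γ) → Prop) : Language (Fin n → Option Γ) :=
  {u | ∃ w : Fin n → canonicalWords Γ,
    (∀ k, P fun j => decode (w j) k) ∧ u = conv fun j => (w j : List Γ)}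

theorem pointwiseLang_eq [NeZero n] (P : (Fin n → Γ) → Prop) :
    pointwiseLang P =
      convShaped ⊓ {u | ∀ j, column u j ∈ canonicalWords Γ} ⊓ lastSeenLang P := by
  ext u
  constructor
  · rintro ⟨w, hP, rfl⟩
    refine ⟨⟨conv_mem_convShaped _, fun j => by rw [column_conv]; exact (w j).2⟩, fun v a h => ?_⟩
    simpa only [getD_getLast?_column_of_prefix_conv h] using hP v.length
  · rintro ⟨⟨hshape, hcanon⟩, hlast⟩
    have hu := conv_column_of_mem_convShaped hshape
    refine ⟨fun j => ⟨column u j, hcanon j⟩, fun k => ?_, hu.symm⟩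
    rw [← hu] at hlast
    have hpos : 0 < (conv (column u)).length :=
      (List.length_pos_iff.mpr (ne_nil_of_mem_canonicalWords (hcanon 0))).trans_le
        (length_le_length_conv _ 0)
    simpa only [decode_min_length_conv] using
      forall_lt_length_of_conv_mem_lastSeenLang hlast (min k ((conv (column u)).length - 1))
        (by omega)

theorem isRegular_pointwiseLang [Finite Γ] [NeZero n] (P : (Fin n → Γ) → Prop) :
    (pointwiseLang P).IsRegular := by
  rw [pointwiseLang_eq]
  exact (isRegular_convShaped.inf (isRegular_setOf_forall_column_mem isRegular_canonicalWords)).inf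
    (isRegular_lastSeenLang P)

noncomputable def map₂ (op : Γ → Γ → Γ) (a b : canonicalWords Γ) : canonicalWords Γ :=
  (decodeEquiv Γ).symm ⟨fun k => op (decode a.1 k) (decode b.1 k),
    (eventuallyConst_decode _).comp₂ op (eventuallyConst_decode _)⟩

noncomputable def map (op : Γ → Γ) (a : canonicalWords Γ) : canonicalWords Γ :=
  (decodeEquiv Γ).symm ⟨fun k => op (decode a.1 k), (eventuallyConst_decode _).comp op⟩

theorem decode_map₂ (op : Γ → Γ → Γ) (a b : canonicalWords Γ) :
    decode (map₂ op a b).1 = fun k => op (decode a.1 k) (decode b.1 k) :=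
  congrArg Subtype.val ((decodeEquiv Γ).apply_symm_apply _)

theorem decode_map (op : Γ → Γ) (a : canonicalWords Γ) :
    decode (map op a).1 = fun k => op (decode a.1 k) :=
  congrArg Subtype.val ((decodeEquiv Γ).apply_symm_apply _)

theorem isRegular_graph_map₂ [Finite Γ] (op : Γ → Γ → Γ) :
    Language.IsRegular {u | ∃ a b : canonicalWords Γ,
      u = conv ![(a : List Γ), (b : List Γ), (map₂ op a b : List Γ)]} := by
  refine (congrArg Language.IsRegular ?_).mp
    (isRegular_pointwiseLang (n := 3) fun v => v 2 = op (v 0) (v 1))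
  ext u
  constructor
  · rintro ⟨w, hw, rfl⟩
    have h₂ : w 2 = map₂ op (w 0) (w 1) :=
      decode_injective ((funext hw).trans (decode_map₂ op _ _).symm :)
    refine ⟨w 0, w 1, ?_⟩
    congr 1
    funext j
    fin_cases j <;> simp [h₂]
  · rintro ⟨a, b, rfl⟩
    refine ⟨![a, b, map₂ op a b], fun k => by simp [decode_map₂], ?_⟩
    congr 1
    funext j
    fin_cases j <;> rfl

theorem isRegular_graph_map [Finite Γ] (op : Γ → Γ) :
    Language.IsRegular {u | ∃ a : canonicalWords Γ,
      u = conv ![(a : List Γ), (map op a : List Γ)]} := by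
  refine (congrArg Language.IsRegular ?_).mp
    (isRegular_pointwiseLang (n := 2) fun v => v 1 = op (v 0))
  ext u
  constructor
  · rintro ⟨w, hw, rfl⟩
    have h₁ : w 1 = map op (w 0) :=
      decode_injective ((funext hw).trans (decode_map op _).symm :)
    refine ⟨w 0, ?_⟩
    congr 1
    funext j
    fin_cases j <;> simp [h₁]
  · rintro ⟨a, rfl⟩
    refine ⟨![a, map op a], fun k => by simp [decode_map], ?_⟩
    congr 1
    funext j
    fin_cases j <;> rfl

end EventuallyConstWords

theorem Filter.EventuallyConst.of_forall_apply {α ι β : Type*} [Finite ι] [Nonempty β]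
    {l : Filter α} {g : α → ι → β} (h : ∀ i, EventuallyConst (g · i) l) :
    EventuallyConst g l := by
  choose c hc using fun i => eventuallyConst_iff_exists_eventuallyEq.mp (h i)
  exact eventuallyConst_iff_exists_eventuallyEq.mpr
    ⟨c, (eventually_all.mpr hc).mono fun _ hx => funext hx⟩

theorem Set.finite_or_finite_compl_iff_eventuallyConst (S : Set ℕ) :
    S.Finite ∨ Sᶜ.Finite ↔ EventuallyConst S atTop := by
  simp only [eventuallyConst_set, ← Nat.cofinite_eq_atTop, eventually_cofinite, not_not,
    Set.compl_def, or_comm]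
  rfl

namespace FinCofin

def equivEventuallyConst (i : ℕ) :
    {s : ℕ → Set (Fin i) // EventuallyConst s atTop} ≃ (Fin i → FinCofin) where
  toFun s j := ⟨{n | j ∈ s.1 n}, (Set.finite_or_finite_compl_iff_eventuallyConst _).mpr
    (s.2.comp (j ∈ ·))⟩
  invFun S := ⟨fun n => {j | n ∈ (S j).1}, EventuallyConst.of_forall_apply fun j =>
    (Set.finite_or_finite_compl_iff_eventuallyConst _).mp (S j).2⟩
  left_inv _ := rfl
  right_inv _ := rfl

end FinCofin

open EventuallyConstWords

noncomputable def wordEquiv (i : ℕ) : canonicalWords (Set (Fin i)) ≃ (Fin i → FinCofin) :=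
  (decodeEquiv _).trans (FinCofin.equivEventuallyConst i)

theorem mem_wordEquiv_apply {i : ℕ} (a : canonicalWords (Set (Fin i))) (j : Fin i) (n : ℕ) :
    n ∈ (wordEquiv i a j).1 ↔ j ∈ decode a.1 n := Iff.rfl

theorem interval_algebra_omega_times_i_automatic_general (i : ℕ) :
    ∃ (Γ : Type) (_ : Fintype Γ) (A : Set (List Γ))
      (fsup finf : A → A → A) (fcompl : A → A) (bot top : A),
      Language.IsRegular (A : Language Γ) ∧
      Language.IsRegular
        {w | ∃ a b : A, w = conv ![(a : List Γ), (b : List Γ), (fsup a b : List Γ)]} ∧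
      Language.IsRegular
        {w | ∃ a b : A, w = conv ![(a : List Γ), (b : List Γ), (finf a b : List Γ)]} ∧
      Language.IsRegular
        {w | ∃ a : A, w = conv ![(a : List Γ), (fcompl a : List Γ)]} ∧
      ∃ e : A ≃ (Fin i → FinCofin),
        (∀ a b : A, e (fsup a b) = fun j => (e a j).union (e b j)) ∧
        (∀ a b : A, e (finf a b) = fun j => (e a j).inter (e b j)) ∧
        (∀ a : A, e (fcompl a) = fun j => (e a j).compl) ∧
        e bot = (fun _ => FinCofin.bot) ∧
        e top = (fun _ => FinCofin.top) := by
  refine ⟨Set (Fin i), inferInstance, canonicalWords _, map₂ (· ∪ ·), map₂ (· ∩ ·), map compl,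
    ⟨[∅], singleton_mem_canonicalWords _⟩, ⟨[Set.univ], singleton_mem_canonicalWords _⟩,
    isRegular_canonicalWords, isRegular_graph_map₂ _, isRegular_graph_map₂ _,
    isRegular_graph_map _, wordEquiv i, fun a b => ?_, fun a b => ?_, fun a => ?_, ?_, ?_⟩
  all_goals
    funext j
    apply Subtype.ext
    ext n
    simp [mem_wordEquiv_apply, decode_map₂, decode_map, decode_singleton, FinCofin.union,
      FinCofin.inter, FinCofin.compl, FinCofin.bot, FinCofin.top]

/-- For every positive integer `i`, the Boolean algebra `B_{ω×i}`, the product of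
`i` copies of the Boolean algebra of finite and cofinite subsets of ℕ, has an
automatic presentation. -/
theorem interval_algebra_omega_times_i_automatic (i : ℕ) (hi : 0 < i) :
    ∃ (Γ : Type) (_ : Fintype Γ) (A : Set (List Γ))
      (fsup finf : A → A → A) (fcompl : A → A) (bot top : A),
      Language.IsRegular (A : Language Γ) ∧
      Language.IsRegular
        {w | ∃ a b : A, w = conv ![(a : List Γ), (b : List Γ), (fsup a b : List Γ)]} ∧
      Language.IsRegular
        {w | ∃ a b : A, w = conv ![(a : List Γ), (b : List Γ), (finf a b : List Γ)]} ∧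
      Language.IsRegular
        {w | ∃ a : A, w = conv ![(a : List Γ), (fcompl a : List Γ)]} ∧
      ∃ e : A ≃ (Fin i → FinCofin),
        (∀ a b : A, e (fsup a b) = fun j => (e a j).union (e b j)) ∧
        (∀ a b : A, e (finf a b) = fun j => (e a j).inter (e b j)) ∧
        (∀ a : A, e (fcompl a) = fun j => (e a j).compl) ∧
        e bot = (fun _ => FinCofin.bot) ∧
        e top = (fun _ => FinCofin.top) :=
  interval_algebra_omega_times_i_automatic_general i
end

section
/- Let (M,×) be a monoid that contains the multiplicative monoid (ℕ,×) of natural numbers as a submonoid, i.e. there is an injective monoid homomorphism from (ℕ,×) into M. Then (M,×) has no automatic presentation: there do not exist a finite alphabet Σ, a regular language A ⊆ Σ*, and a binary operation on A whose graph is a regular ternary relation, such that the resulting monoid is isomorphic to (M,×). -/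
/-!
If a DFA with `C` states accepts the graph of the multiplication, pumping down the tail of
`⊗(x, y, x * y)` beyond `max |x| |y|` shows `|x * y| ≤ max |x| |y| + C`. The first `r` primes
span a copy of `(ℕ^r, +)` inside `(ℕ, ×)`. Splitting an exponent vector as
`a = 2 ⌊a / 2⌋ + (a mod 2)`, the `2^(r k)` vectors with entries below `2^k` are sent to words of
length at most `L + 2 C k`, where `L` bounds the lengths for `0/1`-vectors. There are only
`(|Γ| + 1)^(L + 2 C k)` such words, too few once `r > 2 C (|Γ| + 1)` and `k` is large.
-/

section Conv

variable {α : Type*} {n : ℕ}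

theorem length_conv (w : Fin n → List α) :
    (conv w).length = Finset.univ.sup fun i => (w i).length := by
  simp [conv]

theorem getElem?_conv (w : Fin n → List α) (k : ℕ) :
    (conv w)[k]? = if k < (conv w).length then some (fun i => (w i)[k]?) else none := by
  rw [length_conv]
  split_ifs with h <;> simp [conv, h]

theorem getD_getElem?_conv (w : Fin n → List α) (k : ℕ) :
    (conv w)[k]?.getD (fun _ => none) = fun i => (w i)[k]? := by
  rw [getElem?_conv]
  split_ifs with h
  · rfl
  · funext i
    refine (List.getElem?_eq_none ?_).symm
    rw [length_conv] at h
    exact (Finset.le_sup (f := fun i => (w i).length) (Finset.mem_univ i)).trans (not_lt.1 h)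

theorem conv_injective : Function.Injective (conv : (Fin n → List α) → _) := by
  intro w w' h
  funext i
  refine List.ext_getElem? fun k => ?_
  simpa only [getD_getElem?_conv] using congrFun (congrArg (fun l => l[k]?.getD fun _ => none) h) i

theorem length_conv_three {x y u : List α} (hx : x.length ≤ u.length)
    (hy : y.length ≤ u.length) :
    (conv ![x, y, u]).length = u.length := by
  rw [length_conv]
  refine le_antisymm (Finset.sup_le fun i _ => ?_)
    (Finset.le_sup (f := fun i => (![x, y, u] i).length) (Finset.mem_univ 2))
  fin_cases i <;> simp [hx, hy]

theorem conv_append_of_length_le {x y u : List α} (hx : x.length ≤ u.length)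
    (hy : y.length ≤ u.length) (v : List α) :
    conv ![x, y, u ++ v] = conv ![x, y, u] ++ v.map fun a => ![none, none, some a] := by
  have huv : (conv ![x, y, u ++ v]).length = (u ++ v).length :=
    length_conv_three (by rw [List.length_append]; omega) (by rw [List.length_append]; omega)
  have hu := length_conv_three hx hy
  refine List.ext_getElem? fun k => ?_
  rw [List.getElem?_append, getElem?_conv, getElem?_conv, hu, huv]
  by_cases hk : k < u.length
  · simp only [hk, if_true, show k < (u ++ v).length by rw [List.length_append]; omega]
    congr 1
    funext i
    fin_cases i <;> simp [List.getElem?_append_left hk]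
  · simp only [hk, if_false, List.length_append, List.getElem?_map]
    split_ifs with hkv
    · rw [List.getElem?_eq_getElem (by omega : k - u.length < v.length), Option.map_some]
      congr 1
      funext i
      fin_cases i <;> simp [List.getElem?_eq_none (by omega : x.length ≤ k),
        List.getElem?_eq_none (by omega : y.length ≤ k), List.getElem?_append_right (not_lt.1 hk)]
    · rw [List.getElem?_eq_none (by omega : v.length ≤ k - u.length), Option.map_none]

end Conv

theorem DFA.exists_append_append_mem_accepts_of_card_le {α σ : Type*} [Fintype σ]
    (M : DFA α σ) {u v : List α} (h : u ++ v ∈ M.accepts) (hv : Fintype.card σ ≤ v.length) :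
    ∃ a b c, v = a ++ b ++ c ∧ b ≠ [] ∧ u ++ (a ++ c) ∈ M.accepts := by
  obtain ⟨q, a, b, c, rfl, -, hb, ha, hbq, hc⟩ := M.evalFrom_split (s := M.eval u) hv rfl
  refine ⟨a, b, c, rfl, hb, ?_⟩
  have hacc : ∀ w, u ++ w ∈ M.accepts ↔ M.evalFrom (M.eval u) w ∈ M.accept := fun w => by
    rw [DFA.mem_accepts, DFA.eval, DFA.evalFrom_of_append]
  rwa [hacc, DFA.evalFrom_of_append, ha, hc, ← hacc]

theorem exists_length_mul_le_of_isRegular {Γ : Type*} {A : Set (List Γ)} (mul : A → A → A)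
    (h : Language.IsRegular
      {w | ∃ x y : A, w = conv ![(x : List Γ), (y : List Γ), (mul x y : List Γ)]}) :
    ∃ C, ∀ x y : A,
      (mul x y : List Γ).length ≤ max (x : List Γ).length (y : List Γ).length + C := by
  obtain ⟨σ, _, M, hM⟩ := h
  refine ⟨Fintype.card σ, fun x y => ?_⟩
  set m := max (x : List Γ).length (y : List Γ).length
  set z : List Γ := ↑(mul x y)
  by_contra! hlong
  have hxm : (x : List Γ).length ≤ (z.take m).length := by rw [List.length_take]; omega
  have hym : (y : List Γ).length ≤ (z.take m).length := by rw [List.length_take]; omega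
  have hmem : conv ![(x : List Γ), y, z] ∈ M.accepts := hM ▸ ⟨x, y, rfl⟩
  rw [← List.take_append_drop m z, conv_append_of_length_le hxm hym] at hmem
  obtain ⟨a, b, c, habc, hb, hac⟩ := M.exists_append_append_mem_accepts_of_card_le hmem
    (by rw [List.length_map, List.length_drop]; omega)
  obtain ⟨ab', c', hdrop, hab, rfl⟩ := List.map_eq_append_iff.1 habc
  obtain ⟨a', b', rfl, rfl, rfl⟩ := List.map_eq_append_iff.1 hab
  rw [← List.map_append, ← conv_append_of_length_le hxm hym, hM] at hac
  obtain ⟨x', y', hxy⟩ := hac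
  have hcol := conv_injective hxy
  obtain rfl : x' = x := Subtype.ext (congrFun hcol 0).symm
  obtain rfl : y' = y := Subtype.ext (congrFun hcol 1).symm
  have hdrop' : z.drop m = a' ++ c' :=
    List.append_cancel_left ((List.take_append_drop m z).trans (congrFun hcol 2).symm)
  have hlen := congrArg List.length (hdrop.symm.trans hdrop')
  simp only [List.length_append] at hlen
  exact hb (List.map_eq_nil_iff.2 (List.eq_nil_of_length_eq_zero (by omega)))

theorem le_add_mul_of_lt_two_pow {ι : Type*} (len : (ι → ℕ) → ℕ) {c L : ℕ}
    (hadd : ∀ a b, len (a + b) ≤ max (len a) (len b) + c) (hbit : ∀ ε ≤ 1, len ε ≤ L) :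
    ∀ k (a : ι → ℕ), (∀ i, a i < 2 ^ k) → len a ≤ L + 2 * c * k := by
  intro k
  induction k with
  | zero => exact fun a ha => hbit a fun i => Nat.le_of_lt_succ ((ha i).trans_le (by simp))
  | succ k ih =>
    intro a ha
    set h : ι → ℕ := fun i => a i / 2
    set ε : ι → ℕ := fun i => a i % 2
    have hsplit : a = h + h + ε := by
      funext i; simp only [Pi.add_apply, h, ε]; omega
    have hh : len h ≤ L + 2 * c * k := ih h fun i => by
      have := ha i
      rw [pow_succ] at this
      show a i / 2 < 2 ^ k
      omega
    have hε : len ε ≤ L := hbit ε fun i => Nat.le_of_lt_succ (Nat.mod_lt _ two_pos)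
    calc len a = len (h + h + ε) := congrArg len hsplit
      _ ≤ max (len (h + h)) (len ε) + c := hadd _ _
      _ ≤ max (len h + c) (len ε) + c := by
          gcongr; simpa only [max_self] using hadd h h
      _ ≤ L + 2 * c * (k + 1) := by
          have : max (len h + c) (len ε) ≤ L + 2 * c * k + c := max_le (by omega) (by omega)
          rw [mul_add, mul_one]; omega

theorem card_le_of_injective_of_length_le {ι Γ : Type*} [Fintype ι] [Fintype Γ]
    {φ : ι → List Γ} (hφ : Function.Injective φ) {s : ℕ} (hs : ∀ i, (φ i).length ≤ s) :
    Fintype.card ι ≤ (Fintype.card Γ + 1) ^ s := by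
  have hinj : Function.Injective fun i (k : Fin s) => (φ i)[(k : ℕ)]? := by
    refine fun i j hij => hφ (List.ext_getElem? fun k => ?_)
    by_cases hk : k < s
    · exact congrFun hij ⟨k, hk⟩
    · rw [List.getElem?_eq_none ((hs i).trans (not_lt.1 hk)),
        List.getElem?_eq_none ((hs j).trans (not_lt.1 hk))]
  simpa using Fintype.card_le_of_injective _ hinj

theorem prod_pow_injective {ι : Type*} [Fintype ι] {p : ι → ℕ} (hp : ∀ i, (p i).Prime)
    (hpinj : Function.Injective p) : Function.Injective fun a : ι → ℕ => ∏ i, p i ^ a i := by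
  classical
  intro a b hab
  funext j
  have hfac := congrArg (fun n => Nat.factorization n (p j)) hab
  simp only [Nat.factorization_prod fun i _ => pow_ne_zero _ (hp i).ne_zero,
    Finsupp.coe_finsetSum, Finset.sum_apply, (hp _).factorization_pow,
    Finsupp.single_apply_left hpinj] at hfac
  simpa [Finsupp.single_apply] using hfac

theorem exists_pow_lt_two_pow (b L c : ℕ) : ∃ k, b ^ (L + c * k) < 2 ^ ((b * c + 1) * k) := by
  refine ⟨b * L + 1, ?_⟩
  calc b ^ (L + c * (b * L + 1)) ≤ (2 ^ b) ^ (L + c * (b * L + 1)) :=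
        Nat.pow_le_pow_left Nat.lt_two_pow_self.le _
    _ < 2 ^ ((b * c + 1) * (b * L + 1)) := by
        rw [← pow_mul]; exact Nat.pow_lt_pow_right one_lt_two (by nlinarith)

/-- A monoid containing `(ℕ, ×)` as a submonoid has no automatic presentation:
there are no finite alphabet, regular domain of words, and multiplication with
regular graph such that the resulting monoid is isomorphic to `M`. -/
theorem monoid_containing_nat_mul_not_automatic
    (M : Type*) [Monoid M] (f : ℕ →* M) (hf : Function.Injective f) :
    ¬ ∃ (Γ : Type) (_ : Fintype Γ) (A : Set (List Γ)) (mul : A → A → A)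
        (e : M ≃ A),
        Language.IsRegular (A : Language Γ) ∧
        Language.IsRegular
          {w | ∃ x y : A, w = conv ![(x : List Γ), (y : List Γ), (mul x y : List Γ)]} ∧
        ∀ x y : M, e (x * y) = mul (e x) (e y) := by
  rintro ⟨Γ, _, A, mul, e, -, hgraph, hmul⟩
  obtain ⟨C, hC⟩ := exists_length_mul_le_of_isRegular mul hgraph
  set b := Fintype.card Γ + 1
  set r := b * (2 * C) + 1
  set P : (Fin r → ℕ) → ℕ := fun a => ∏ i : Fin r, Nat.nth Nat.Prime i ^ a i
  have hPinj : Function.Injective P :=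
    prod_pow_injective (fun i => Nat.prime_nth_prime i)
      ((Nat.nth_injective Nat.infinite_setOfPred_prime).comp Fin.val_injective)
  set len : (Fin r → ℕ) → ℕ := fun a => (e (f (P a)) : List Γ).length
  have hadd : ∀ a a', len (a + a') ≤ max (len a) (len a') + C := fun a a' => by
    simpa only [len, P, Pi.add_apply, pow_add, Finset.prod_mul_distrib, map_mul, hmul] using
      hC _ _
  obtain ⟨L, hL⟩ := ((Set.finite_Iic (1 : Fin r → ℕ)).image len).bddAbove
  have hlen := le_add_mul_of_lt_two_pow len hadd fun ε hε => hL ⟨ε, hε, rfl⟩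
  obtain ⟨k, hk⟩ := exists_pow_lt_two_pow b L (2 * C)
  have hinj : Function.Injective fun a : Fin r → Fin (2 ^ k) => (e (f (P (a ·))) : List Γ) :=
    fun a a' h => funext fun i => Fin.ext (congrFun (hPinj (hf (e.injective (Subtype.ext h)))) i)
  have hcard := card_le_of_injective_of_length_le hinj fun a => hlen k _ fun i => (a i).2
  rw [Fintype.card_fun, Fintype.card_fin, Fintype.card_fin, ← pow_mul, mul_comm] at hcard
  exact (hcard.trans_lt hk).false
end
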